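/- Let u be the one-sided fixed point of the Fibonacci substitution S(a)=ab, S(b)=a, and W_k = S^{k-1}(a) with |W_k| = F_k. Call a finite subword w of u repeatable if the bi-infinite periodic sequence with unit cell w is a shift of the bi-infinite periodic sequence with unit cell u₀u₁⋯u_{|w|−1}. Then for each k, there is precisely one subword of u of length F_k which is not repeatable, characterized as follows: writing S^{k+1}(a) = W_{k+1} W_k, the nonrepeatable subword of length F_k is the unique word w such that W_{k+1} W_k = v w x with |x| = 1. -/

import Mathlib

/-- The Fibonacci substitution words `S^k(a)` over the alphabet `{a, b}`, with `a = true`,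
`b = false`: `S^0(a) = a`, `S^1(a) = ab`, `S^{k+2}(a) = S^{k+1}(a) S^k(a)`.
Thus `fibWord (k-1)` is the word `W_k = S^{k-1}(a)`, of length `F_k`. -/
def fibWord : ℕ → List Bool
  | 0 => [true]
  | 1 => [true, false]
  | (k + 2) => fibWord (k + 1) ++ fibWord k

/-- The one-sided infinite fixed point `u = abaababaabaab…` of the Fibonacci substitution;
`fibWord (n + 2)` has length `> n` and all the words `fibWord k` are nested prefixes, so
this gives the `n`-th letter of `u`. -/
def uSeq (n : ℕ) : Bool := (fibWord (n + 2)).getD n true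

/-- `w` is a (finite) subword of `u`, i.e. a block of consecutive letters of `u`. -/
def subwordOfU (w : List Bool) : Prop :=
  ∃ i : ℕ, w = (List.range w.length).map fun j => uSeq (i + j)

/-- The bi-infinite periodic sequence with unit cell `w`. -/
def periodize (w : List Bool) (n : ℤ) : Bool :=
  w.getD (n % (w.length : ℤ)).toNat true

/-- `w` is repeatable: the bi-infinite periodic sequence with unit cell `w` is a shift of
the bi-infinite periodic sequence with unit cell `u₀u₁⋯u_{|w|−1}`. -/
def Repeatable (w : List Bool) : Prop :=
  ∃ s : ℤ, ∀ n : ℤ,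
    periodize w n = periodize ((List.range w.length).map uSeq) (n + s)

/-! Write `L = |W_j|`, so `k = j + 1`. The words `W_{j+1} W_j` and `W_j W_{j+1}` differ only by a
swap of their last two letters; hence the prefix of `u` of length `|W_{j+2}| - 2` has period `L`,
and the next letter breaks that period. Since `u = S^{j+1}(u)` is a concatenation of blocks
`W_{j+1}` and `W_j`, each beginning with `W_j`, every subword of length `L` lies in `W_j W_j` or
in `W_{j+2} = W_{j+1} W_j`. It is therefore a rotation of `W_j` (and a word of this length is
repeatable exactly when it is such a rotation), except for the window of `W_{j+2}` that ends just
before its last letter. That window agrees with a rotation of `W_j` except in its last letter,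
so its letter count is wrong and it is not a rotation. -/

theorem fibWord_add_two (k : ℕ) : fibWord (k + 2) = fibWord (k + 1) ++ fibWord k := rfl

theorem length_fibWord_add_two (k : ℕ) :
    (fibWord (k + 2)).length = (fibWord (k + 1)).length + (fibWord k).length := by
  rw [fibWord_add_two, List.length_append]

theorem lt_length_fibWord (m : ℕ) : m < (fibWord m).length := by
  induction m using fibWord.induct with
  | case1 | case2 => simp [fibWord]
  | case3 k ih₁ ih₀ => rw [length_fibWord_add_two]; omega

theorem fibWord_prefix_fibWord {m n : ℕ} (h : m ≤ n) : fibWord m <+: fibWord n := by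
  induction n, h using Nat.le_induction with
  | base => exact List.prefix_rfl
  | succ n _ ih =>
    refine ih.trans ?_
    match n with
    | 0 => exact ⟨[false], rfl⟩
    | n + 1 => exact ⟨fibWord n, rfl⟩

theorem uSeq_eq_getD {m n : ℕ} (hn : n < (fibWord m).length) :
    uSeq n = (fibWord m).getD n true := by
  have hn' : n < (fibWord (n + 2)).length := by have := lt_length_fibWord (n + 2); omega
  rw [uSeq, List.getD_eq_getElem _ _ hn, List.getD_eq_getElem _ _ hn']
  rcases le_total m (n + 2) with h | h
  · exact ((fibWord_prefix_fibWord h).getElem hn).symm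
  · exact (fibWord_prefix_fibWord h).getElem hn'

section Window

variable {α : Type*} (f : ℕ → α)

def window (i n : ℕ) : List α := (List.range' i n).map f

@[simp] theorem length_window (i n : ℕ) : (window f i n).length = n := by simp [window]

theorem window_add (i m n : ℕ) : window f i (m + n) = window f i m ++ window f (i + m) n := by
  rw [window, ← List.range'_append, List.map_append, Nat.one_mul]; rfl

theorem window_one (i : ℕ) : window f i 1 = [f i] := rfl

theorem window_congr {g : ℕ → α} {i i' n : ℕ} (h : ∀ t < n, f (i + t) = g (i' + t)) :
    window f i n = window g i' n := by
  refine List.ext_getElem (by simp) fun t h₁ _ => ?_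
  simpa [window] using h t (by simpa using h₁)

theorem take_drop_window {i n o m : ℕ} (h : o + m ≤ n) :
    ((window f i n).drop o).take m = window f (i + o) m := by
  rw [window, ← List.map_drop, ← List.map_take, List.drop_range',
    List.take_range'_of_length_ge (by omega), Nat.mul_one]; rfl

end Window

theorem subwordOfU_iff {w : List Bool} : subwordOfU w ↔ ∃ i, w = window uSeq i w.length := by
  simp only [subwordOfU, window, List.range'_eq_map_range, List.map_map]; rfl

theorem window_uSeq_zero (m : ℕ) : window uSeq 0 (fibWord m).length = fibWord m :=
  List.ext_getElem (by simp) fun n h _ => by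
    simp only [window, List.getElem_map, List.getElem_range']
    rw [uSeq_eq_getD (m := m) (by simpa using h), List.getD_eq_getElem _ _ (by simpa using h)]
    simp

theorem take_drop_fibWord {m i n : ℕ} (h : i + n ≤ (fibWord m).length) :
    ((fibWord m).drop i).take n = window uSeq i n := by
  conv_lhs => rw [← window_uSeq_zero m]
  rw [take_drop_window _ h, Nat.zero_add]

theorem periodize_natCast (l : List Bool) (m : ℕ) :
    periodize l m = l.getD (m % l.length) true := by
  rw [periodize, ← Int.natCast_mod, Int.toNat_natCast]

theorem window_periodize (l : List Bool) (i : ℕ) :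
    window (fun m : ℕ => periodize l m) i l.length = l.rotate i := by
  refine List.ext_getElem (by simp) fun t h₁ h₂ => ?_
  simp only [window, List.getElem_map, List.getElem_range', periodize_natCast, List.getElem_rotate]
  rw [List.getD_eq_getElem _ _ (Nat.mod_lt _ (by simp at h₁; omega))]
  congr 1; rw [Nat.one_mul, Nat.add_comm]

theorem periodize_congr (l : List Bool) {a b : ℤ} (h : a % l.length = b % l.length) :
    periodize l a = periodize l b := by
  rw [periodize, periodize, h]

theorem periodize_rotate (l : List Bool) (r : ℕ) (n : ℤ) :
    periodize (l.rotate r) n = periodize l (n + r) := by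
  obtain rfl | hl := eq_or_ne l []
  · simp [periodize]
  have hL : (0 : ℤ) < l.length := by simpa [List.length_pos_iff] using hl
  obtain ⟨k, hk⟩ : ∃ k : ℕ, n % l.length = k :=
    ⟨_, (Int.toNat_of_nonneg (Int.emod_nonneg _ hL.ne')).symm⟩
  have hkL : k < l.length := by have := Int.emod_lt_of_pos n hL; omega
  rw [periodize, List.length_rotate, hk, Int.toNat_natCast,
    List.getD_eq_getElem _ _ (by simpa using hkL), List.getElem_rotate,
    periodize_congr l (b := ((k + r : ℕ) : ℤ)) (by push_cast; rw [← hk, Int.emod_add_emod]),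
    periodize_natCast, List.getD_eq_getElem]

theorem eq_of_periodize_eq {w v : List Bool} (h : w.length = v.length)
    (hp : ∀ n : ℕ, periodize w n = periodize v n) : w = v := by
  refine List.ext_getElem h fun t h₁ h₂ => ?_
  have := hp t
  rwa [periodize_natCast, periodize_natCast, Nat.mod_eq_of_lt h₁, ← h, Nat.mod_eq_of_lt h₁,
    List.getD_eq_getElem _ _ h₁, List.getD_eq_getElem _ _ h₂] at this

theorem exists_periodize_shift_iff {w l : List Bool} (h : w.length = l.length) :
    (∃ s : ℤ, ∀ n, periodize w n = periodize l (n + s)) ↔ l ~r w := by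
  constructor
  · rintro ⟨s, hs⟩
    obtain rfl | hl := eq_or_ne l []
    · rw [List.eq_nil_of_length_eq_zero (h.trans List.length_nil)]
    have hL : (0 : ℤ) < l.length := by simpa [List.length_pos_iff] using hl
    refine ⟨(s % l.length).toNat, (eq_of_periodize_eq (by simp [h]) fun n => ?_).symm⟩
    rw [hs, periodize_rotate, Int.toNat_of_nonneg (Int.emod_nonneg _ hL.ne')]
    exact periodize_congr l (by rw [Int.add_emod_emod])
  · rintro ⟨r, rfl⟩
    exact ⟨r, periodize_rotate l r⟩

theorem repeatable_iff_isRotated {w : List Bool} {m : ℕ} (hw : w.length = (fibWord m).length) :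
    Repeatable w ↔ fibWord m ~r w := by
  have hpre : (List.range w.length).map uSeq = fibWord m := by
    simpa [hw, window, List.range'_eq_map_range] using window_uSeq_zero m
  rw [Repeatable, hpre]
  exact exists_periodize_shift_iff hw

theorem fibWord_append_swap (j : ℕ) : ∃ (C : List Bool) (c d : Bool), c ≠ d ∧
    fibWord (j + 1) ++ fibWord j = C ++ [c, d] ∧ fibWord j ++ fibWord (j + 1) = C ++ [d, c] := by
  induction j with
  | zero => exact ⟨[true], false, true, by decide, rfl, rfl⟩
  | succ n ih =>
    obtain ⟨C, c, d, hcd, h₁, h₂⟩ := ih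
    refine ⟨fibWord (n + 1) ++ C, d, c, hcd.symm, ?_, ?_⟩
    · rw [fibWord_add_two, List.append_assoc, h₂, List.append_assoc]
    · rw [fibWord_add_two, ← List.append_assoc, List.append_assoc, h₁, List.append_assoc]

theorem uSeq_sub_length_fibWord {j m : ℕ} (h₁ : (fibWord j).length ≤ m)
    (h₂ : m < (fibWord (j + 2)).length) :
    uSeq (m - (fibWord j).length) = (fibWord j ++ fibWord (j + 1)).getD m true := by
  rw [List.getD_append_right _ _ _ _ h₁, uSeq_eq_getD]
  rw [length_fibWord_add_two] at h₂; omega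

theorem periodize_sub_length (l : List Bool) {m : ℕ} (h : l.length ≤ m) :
    periodize l (m - l.length : ℕ) = periodize l m := by
  rw [periodize_natCast, periodize_natCast, Nat.mod_eq_sub_mod h]

theorem uSeq_eq_periodize {j m : ℕ} (hm : m + 3 ≤ (fibWord (j + 2)).length) :
    uSeq m = periodize (fibWord j) m := by
  induction m using Nat.strong_induction_on with
  | _ m ih =>
    rcases lt_or_ge m (fibWord j).length with h | h
    · rw [periodize_natCast, Nat.mod_eq_of_lt h, uSeq_eq_getD h]
    obtain ⟨C, c, d, -, h₁, h₂⟩ := fibWord_append_swap j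
    have hC : C.length + 2 = (fibWord (j + 2)).length := by
      rw [fibWord_add_two, h₁]; simp
    calc uSeq m = (C ++ [c, d]).getD m true := by
          rw [uSeq_eq_getD (m := j + 2) (by omega), fibWord_add_two, h₁]
      _ = (C ++ [d, c]).getD m true := by
          rw [List.getD_append _ _ _ _ (by omega), List.getD_append _ _ _ _ (by omega)]
      _ = uSeq (m - (fibWord j).length) := by rw [← h₂, uSeq_sub_length_fibWord h (by omega)]
      _ = periodize (fibWord j) m := by
          rw [ih _ (by have := lt_length_fibWord j; omega) (by omega),
            periodize_sub_length _ h]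

theorem uSeq_ne_periodize {j m : ℕ} (hm : m + 2 = (fibWord (j + 2)).length) :
    uSeq m ≠ periodize (fibWord j) m := by
  obtain ⟨C, c, d, hcd, h₁, h₂⟩ := fibWord_append_swap j
  have hC : C.length + 2 = (fibWord (j + 2)).length := by
    rw [fibWord_add_two, h₁]; simp
  have hL : (fibWord j).length + 2 ≤ (fibWord (j + 2)).length := by
    have := lt_length_fibWord (j + 1); rw [length_fibWord_add_two]; omega
  have := lt_length_fibWord j
  obtain rfl : m = C.length := by omega
  rw [← periodize_sub_length _ (by omega), ← uSeq_eq_periodize (by omega),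
    uSeq_sub_length_fibWord (by omega) (by omega), uSeq_eq_getD (m := j + 2) (by omega),
    fibWord_add_two, h₁, h₂]
  simpa using hcd

-- `S^(j+1)`, using `S^(j+1)(b) = S^j(a)`.
def fibSubstPow (j : ℕ) (w : List Bool) : List Bool :=
  w.flatMap fun c => if c then fibWord (j + 1) else fibWord j

theorem fibSubstPow_cons (j : ℕ) (c : Bool) (w : List Bool) :
    fibSubstPow j (c :: w) = (if c then fibWord (j + 1) else fibWord j) ++ fibSubstPow j w :=
  List.flatMap_cons

theorem fibSubstPow_fibWord (j m : ℕ) : fibSubstPow j (fibWord m) = fibWord (m + j + 1) := by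
  induction m using fibWord.induct with
  | case1 => simp [fibSubstPow, fibWord]
  | case2 => simp [fibSubstPow, fibWord, Nat.add_comm 1 j, fibWord_add_two]
  | case3 k ih₁ ih₀ =>
    rw [fibWord_add_two, fibSubstPow, List.flatMap_append, ← fibSubstPow, ← fibSubstPow, ih₁,
      ih₀, show k + 2 + j + 1 = (k + j + 1) + 2 by omega, fibWord_add_two,
      Nat.add_right_comm k 1 j]

theorem fibWord_prefix_fibSubstPow (j : ℕ) (c : Bool) (w : List Bool) :
    fibWord j <+: fibSubstPow j (c :: w) := by
  rw [fibSubstPow_cons]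
  refine List.IsPrefix.trans ?_ (List.prefix_append _ _)
  cases c
  · exact List.prefix_rfl
  · exact fibWord_prefix_fibWord (Nat.le_succ j)

/-- Every block of `S^(j+1)(w)` is `W_j` or `W_{j+1}` and starts with `W_j`, so a window of
length `|W_j|` starting in a block `B` lies inside `B ++ W_j`. -/
theorem take_drop_fibSubstPow (j : ℕ) (w : List Bool) {i : ℕ}
    (h : i + (fibWord j).length ≤ (fibSubstPow j w).length) :
    ∃ B ∈ [fibWord j, fibWord (j + 1)], ∃ o < B.length,
      ((fibSubstPow j w).drop i).take (fibWord j).length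
        = ((B ++ fibWord j).drop o).take (fibWord j).length := by
  induction w generalizing i with
  | nil =>
    simp only [fibSubstPow, List.flatMap_nil, List.length_nil] at h
    have := lt_length_fibWord j; omega
  | cons c w ih =>
    rw [fibSubstPow_cons, List.length_append] at h
    rw [fibSubstPow_cons]
    set B := if c then fibWord (j + 1) else fibWord j
    by_cases hi : B.length ≤ i
    · rw [List.drop_append, List.drop_eq_nil_of_le hi, List.nil_append]
      exact ih (by omega)
    refine ⟨B, by cases c <;> simp [B], i, by omega, ?_⟩
    rw [List.drop_append_of_le_length (by omega), List.drop_append_of_le_length (by omega),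
      List.take_append, List.take_append]
    congr 1
    cases w with
    | nil =>
      simp only [fibSubstPow, List.flatMap_nil, List.length_nil] at h
      rw [List.length_drop, show (fibWord j).length - (B.length - i) = 0 by omega]; rfl
    | cons c' w =>
      obtain ⟨Y, hY⟩ := fibWord_prefix_fibSubstPow j c' w
      rw [← hY, List.take_append_of_le_length (by omega)]

theorem take_drop_append_self {α : Type*} {l : List α} {o : ℕ} (h : o ≤ l.length) :
    ((l ++ l).drop o).take l.length = l.rotate o := by
  rw [List.drop_append_of_le_length h, List.take_append, List.take_of_length_le (by simp),
    List.length_drop, List.rotate_eq_drop_append_take h, Nat.sub_sub_self h]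

def specialWord (j : ℕ) : List Bool :=
  window uSeq ((fibWord (j + 1)).length - 1) (fibWord j).length

theorem isRotated_or_eq_specialWord (j i : ℕ) :
    fibWord j ~r window uSeq i (fibWord j).length ∨
      window uSeq i (fibWord j).length = specialWord j := by
  set L := (fibWord j).length
  have hM : i + L ≤ (fibSubstPow j (fibWord (i + L))).length := by
    rw [fibSubstPow_fibWord]; have := lt_length_fibWord (i + L + j + 1); omega
  obtain ⟨B, hB, o, ho, hw⟩ := take_drop_fibSubstPow j _ hM
  rw [fibSubstPow_fibWord] at hM hw
  rw [← take_drop_fibWord hM, hw]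
  simp only [List.mem_cons, List.not_mem_nil, or_false] at hB
  rcases hB with rfl | rfl
  · exact .inl ⟨o, (take_drop_append_self ho.le).symm⟩
  have := lt_length_fibWord (j + 1)
  rw [← fibWord_add_two, take_drop_fibWord (by rw [length_fibWord_add_two]; omega)]
  rcases Nat.lt_or_ge o ((fibWord (j + 1)).length - 1) with ho' | ho'
  · refine .inl ⟨o, ?_⟩
    rw [← window_periodize]
    refine window_congr _ fun t ht => (uSeq_eq_periodize ?_).symm
    rw [length_fibWord_add_two]; omega
  · exact .inr (by rw [specialWord, show o = (fibWord (j + 1)).length - 1 by omega])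

theorem not_repeatable_specialWord (j : ℕ) : ¬ Repeatable (specialWord j) := by
  rw [repeatable_iff_isRotated (m := j) (by simp [specialWord])]
  intro hrot
  set L := (fibWord j).length
  set i₀ := (fibWord (j + 1)).length - 1
  have hL : 0 < L := by have := lt_length_fibWord j; omega
  have hspecial : specialWord j = window uSeq i₀ (L - 1) ++ [uSeq (i₀ + (L - 1))] := by
    rw [specialWord, ← window_one, ← window_add, Nat.sub_add_cancel hL]
  set p : ℕ → Bool := fun m => periodize (fibWord j) m
  have hrotate : (fibWord j).rotate i₀ = window p i₀ (L - 1) ++ [p (i₀ + (L - 1))] := by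
    rw [← window_periodize, ← window_one p, ← window_add, Nat.sub_add_cancel hL]
  have hperiodic : window uSeq i₀ (L - 1) = window p i₀ (L - 1) :=
    window_congr _ fun t ht => uSeq_eq_periodize (by
      have := lt_length_fibWord (j + 1); rw [length_fibWord_add_two]; omega)
  have hperm := (hrot.symm.trans ⟨i₀, rfl⟩).perm
  rw [hspecial, hrotate, hperiodic, List.perm_append_left_iff,
    List.singleton_perm_singleton] at hperm
  refine uSeq_ne_periodize ?_ hperm
  have := lt_length_fibWord (j + 1); rw [length_fibWord_add_two]; omega

theorem fibWord_add_two_eq_append_specialWord (j : ℕ) :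
    fibWord (j + 2) = window uSeq 0 ((fibWord (j + 1)).length - 1) ++ specialWord j
      ++ [uSeq ((fibWord (j + 1)).length - 1 + (fibWord j).length)] := by
  have := lt_length_fibWord (j + 1)
  rw [specialWord, ← window_one, ← window_uSeq_zero (j + 2), length_fibWord_add_two,
    show (fibWord (j + 1)).length + (fibWord j).length
      = (fibWord (j + 1)).length - 1 + (fibWord j).length + 1 by omega,
    window_add, window_add]
  simp only [Nat.zero_add]

theorem nonrepeatable_subword_iff {j : ℕ} {w : List Bool} :
    (w.length = (fibWord j).length ∧ subwordOfU w ∧ ¬ Repeatable w) ↔ w = specialWord j := by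
  constructor
  · rintro ⟨hlen, hsub, hrep⟩
    obtain ⟨i, hi⟩ := subwordOfU_iff.1 hsub
    rw [hlen] at hi
    subst hi
    exact (isRotated_or_eq_specialWord j i).resolve_left
      fun h => hrep ((repeatable_iff_isRotated (by simp)).2 h)
  · rintro rfl
    exact ⟨by simp [specialWord], subwordOfU_iff.2 ⟨_, by rw [specialWord, length_window]⟩,
      not_repeatable_specialWord j⟩

/-- For each `k ≥ 1` there is precisely one subword of `u` of length `F_k`
(where `F_k = |W_k|`, `W_k = S^{k-1}(a) = fibWord (k-1)`) which is not repeatable, and it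
is characterized as the subword `w` of `S^{k+1}(a) = W_{k+1} W_k` with
`W_{k+1} W_k = v w x`, `|x| = 1`. -/
theorem stmt11 (k : ℕ) (hk : 1 ≤ k) :
    (∃! w : List Bool,
        w.length = (fibWord (k - 1)).length ∧ subwordOfU w ∧ ¬ Repeatable w) ∧
    ∀ w : List Bool,
      (w.length = (fibWord (k - 1)).length ∧ subwordOfU w ∧ ¬ Repeatable w) →
      ∃ v x : List Bool, fibWord (k + 1) = v ++ w ++ x ∧ x.length = 1 := by
  obtain ⟨j, rfl⟩ : ∃ j, k = j + 1 := ⟨k - 1, by omega⟩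
  refine ⟨⟨specialWord j, nonrepeatable_subword_iff.2 rfl,
    fun w hw => nonrepeatable_subword_iff.1 hw⟩, fun w hw => ?_⟩
  rw [nonrepeatable_subword_iff.1 hw]
  exact ⟨_, _, fibWord_add_two_eq_append_specialWord j, rfl⟩
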